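/- Let L₀, …, L_{m−1} : ℝⁿ → ℝ be twice continuously differentiable with L̄ = (1/m)∑ᵢ Lᵢ, and set vᵢ(θ) = β(∇L̄(θ) − ∇Lᵢ(θ)). Then the first-order Taylor approximation of the averaged displaced gradient satisfies: (1/m) ∑ᵢ [∇Lᵢ(θ) − β ∇²Lᵢ(θ)(∇L̄(θ) − ∇Lᵢ(θ))] = ∇L̄(θ) + (β/(2m)) ∇( ∑ᵢ ‖∇Lᵢ(θ) − ∇L̄(θ)‖² ). -/

import Mathlib

/-!
Write `gᵢ = ∇Lᵢ(θ)`, `Hᵢ = ∇²Lᵢ(θ)` and `ḡ`, `H̄` for their averages. The deviations `gᵢ - ḡ`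
sum to zero, so `∑ Hᵢ (gᵢ - ḡ) = ∑ (Hᵢ - H̄) (gᵢ - ḡ)`; and since Hessians are symmetric,
`2 (Hᵢ - H̄) (gᵢ - ḡ)` is the gradient at `θ` of `‖∇Lᵢ - ∇L̄‖²`.
-/

open InnerProductSpace RealInnerProductSpace Finset

section Gradient

variable {E : Type*} [NormedAddCommGroup E] [InnerProductSpace ℝ E] [CompleteSpace E]

theorem HasGradientAt.fun_sum {ι : Type*} {f : ι → E → ℝ} {f' : ι → E} {x : E} (s : Finset ι)
    (hf : ∀ i ∈ s, HasGradientAt (f i) (f' i) x) :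
    HasGradientAt (fun y => ∑ i ∈ s, f i y) (∑ i ∈ s, f' i) x := by
  rw [hasGradientAt_iff_hasFDerivAt, map_sum]
  exact HasFDerivAt.fun_sum fun i hi => hasGradientAt_iff_hasFDerivAt.mp (hf i hi)

theorem HasGradientAt.const_mul {f : E → ℝ} {f' x : E} (c : ℝ) (hf : HasGradientAt f f' x) :
    HasGradientAt (fun y => c * f y) (c • f') x := by
  rw [hasGradientAt_iff_hasFDerivAt, map_smul]
  exact (hasGradientAt_iff_hasFDerivAt.mp hf).const_mul c

theorem ContDiffAt.hasFDerivAt_gradient {f : E → ℝ} {x : E} (hf : ContDiffAt ℝ 2 f x) :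
    HasFDerivAt (gradient f)
      ((toDual ℝ E).symm.toContinuousLinearEquiv.toContinuousLinearMap ∘L
        fderiv ℝ (fderiv ℝ f) x) x :=
  (toDual ℝ E).symm.toContinuousLinearEquiv.toContinuousLinearMap.hasFDerivAt.comp x
    ((hf.fderiv_right (m := 1) le_rfl).differentiableAt one_ne_zero).hasFDerivAt

theorem ContDiffAt.differentiableAt_gradient {f : E → ℝ} {x : E} (hf : ContDiffAt ℝ 2 f x) :
    DifferentiableAt ℝ (gradient f) x :=
  hf.hasFDerivAt_gradient.differentiableAt

theorem ContDiffAt.inner_fderiv_gradient {f : E → ℝ} {x : E} (hf : ContDiffAt ℝ 2 f x) (u v : E) :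
    ⟪fderiv ℝ (gradient f) x u, v⟫_ℝ = fderiv ℝ (fderiv ℝ f) x u v := by
  simp [hf.hasFDerivAt_gradient.fderiv]

theorem ContDiffAt.isSymmetric_fderiv_gradient {f : E → ℝ} {x : E} (hf : ContDiffAt ℝ 2 f x) :
    (fderiv ℝ (gradient f) x : E →ₗ[ℝ] E).IsSymmetric := fun u v => by
  rw [real_inner_comm _ u, ContinuousLinearMap.coe_coe,
    hf.inner_fderiv_gradient, hf.inner_fderiv_gradient,
    (hf.isSymmSndFDerivAt (by simp)).eq u v]

theorem HasFDerivAt.hasGradientAt_norm_sq {F : E → E} {F' : E →L[ℝ] E} {x : E}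
    (hF : HasFDerivAt F F' x) (hF' : (F' : E →ₗ[ℝ] E).IsSymmetric) :
    HasGradientAt (fun y => ‖F y‖ ^ 2) ((2 : ℝ) • F' (F x)) x := by
  rw [hasGradientAt_iff_hasFDerivAt]
  refine hF.norm_sq.congr_fderiv ?_
  ext v
  simpa using (hF' (F x) v).symm

end Gradient

section Average

variable {E : Type*} [NormedAddCommGroup E] [InnerProductSpace ℝ E] [CompleteSpace E]
  {ι : Type*} [Fintype ι]

theorem gradient_const_mul_sum {L : ι → E → ℝ} (hL : ∀ i, Differentiable ℝ (L i)) (c : ℝ) :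
    gradient (fun y => c * ∑ j, L j y) = fun y => c • ∑ j, gradient (L j) y :=
  gradient_eq fun y => (HasGradientAt.fun_sum univ fun j _ => (hL j y).hasGradientAt).const_mul c

theorem hasGradientAt_sum_norm_sq_sub {G : ι → E → E} {H : ι → E →L[ℝ] E} {Gbar : E → E}
    {Hbar : E →L[ℝ] E} {x : E} (hG : ∀ i, HasFDerivAt (G i) (H i) x)
    (hGbar : HasFDerivAt Gbar Hbar x)
    (hH : ∀ i, (H i : E →ₗ[ℝ] E).IsSymmetric) (hHbar : (Hbar : E →ₗ[ℝ] E).IsSymmetric) :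
    HasGradientAt (fun y => ∑ i, ‖G i y - Gbar y‖ ^ 2)
      (∑ i, (2 : ℝ) • (H i - Hbar) (G i x - Gbar x)) x :=
  HasGradientAt.fun_sum univ fun i _ => ((hG i).sub hGbar).hasGradientAt_norm_sq ((hH i).sub hHbar)

end Average

section Algebra

variable {E : Type*} [AddCommGroup E] [Module ℝ E] {ι : Type*} [Fintype ι]

theorem sum_sub_average (g : ι → E) :
    ∑ i, (g i - (1 / (Fintype.card ι : ℝ)) • ∑ j, g j) = 0 := by
  rcases isEmpty_or_nonempty ι with hι | hι
  · simp
  · rw [sum_sub_distrib, sum_const, card_univ, ← Nat.cast_smul_eq_nsmul ℝ, smul_smul,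
      mul_one_div_cancel (by positivity), one_smul, sub_self]

theorem average_sub_smul_apply_eq_add_smul_sum [TopologicalSpace E] [IsTopologicalAddGroup E]
    {g : ι → E} {H : ι → E →L[ℝ] E} {gbar : E}
    (hgbar : gbar = (1 / (Fintype.card ι : ℝ)) • ∑ j, g j)
    (Hbar : E →L[ℝ] E) (β : ℝ) :
    (1 / (Fintype.card ι : ℝ)) • ∑ i, (g i - β • H i (gbar - g i))
      = gbar + (β / (2 * (Fintype.card ι : ℝ))) • ∑ i, (2 : ℝ) • (H i - Hbar) (g i - gbar) := by
  have hcentre : ∑ i, (H i - Hbar) (g i - gbar) = ∑ i, H i (g i - gbar) := by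
    rw [← sub_eq_zero, ← sum_sub_distrib]
    simp only [sub_apply, sub_sub_cancel_left, ← map_sum, sum_neg_distrib, hgbar,
      sum_sub_average, map_zero, neg_zero]
  have hneg : ∀ i, H i (gbar - g i) = -H i (g i - gbar) := fun i => by rw [← map_neg, neg_sub]
  rw [← smul_sum, hcentre]
  simp only [hneg, smul_neg, sub_neg_eq_add, sum_add_distrib, smul_add, ← hgbar, ← smul_sum,
    smul_smul]
  congr 2
  field_simp

end Algebra

theorem igr_first_order_identity_general
    (n m : ℕ) (β : ℝ) (L : Fin m → EuclideanSpace ℝ (Fin n) → ℝ)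
    (hL : ∀ i, ContDiff ℝ 2 (L i)) (θ : EuclideanSpace ℝ (Fin n)) :
    (1 / (m : ℝ)) • ∑ i : Fin m,
      (gradient (L i) θ
        - β • (fderiv ℝ (gradient (L i)) θ)
            (gradient (fun θ => (1 / (m : ℝ)) * ∑ j : Fin m, L j θ) θ - gradient (L i) θ))
      = gradient (fun θ => (1 / (m : ℝ)) * ∑ j : Fin m, L j θ) θ
        + (β / (2 * (m : ℝ))) • gradient
            (fun θ => ∑ i : Fin m,
              ‖gradient (L i) θ - gradient (fun θ => (1 / (m : ℝ)) * ∑ j : Fin m, L j θ) θ‖ ^ 2)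
            θ := by
  set Lbar := fun θ => (1 / (m : ℝ)) * ∑ j : Fin m, L j θ
  have hLbar : ContDiff ℝ 2 Lbar := contDiff_const.mul (ContDiff.sum fun i _ => hL i)
  have hgrad_Lbar :
      gradient Lbar θ = (1 / (Fintype.card (Fin m) : ℝ)) • ∑ j, gradient (L j) θ := by
    rw [Fintype.card_fin, gradient_const_mul_sum fun i => (hL i).differentiable two_ne_zero]
  have hhess : ∀ i, HasFDerivAt (gradient (L i)) (fderiv ℝ (gradient (L i)) θ) θ :=
    fun i => (hL i).contDiffAt.differentiableAt_gradient.hasFDerivAt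
  rw [(hasGradientAt_sum_norm_sq_sub hhess hLbar.contDiffAt.differentiableAt_gradient.hasFDerivAt
    (fun i => (hL i).contDiffAt.isSymmetric_fderiv_gradient)
    hLbar.contDiffAt.isSymmetric_fderiv_gradient).gradient]
  simpa only [Fintype.card_fin] using
    average_sub_smul_apply_eq_add_smul_sum hgrad_Lbar (fderiv ℝ (gradient Lbar) θ) β

/-- The first-order Taylor approximation of the averaged displaced gradient equals the ERM
gradient plus `β/(2m)` times the gradient of the gradient-variance regularizer. -/
theorem igr_first_order_identity
    (n m : ℕ) (hm : 1 ≤ m) (β : ℝ) (L : Fin m → EuclideanSpace ℝ (Fin n) → ℝ)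
    (hL : ∀ i, ContDiff ℝ 2 (L i)) (θ : EuclideanSpace ℝ (Fin n)) :
    (1 / (m : ℝ)) • ∑ i : Fin m,
      (gradient (L i) θ
        - β • (fderiv ℝ (gradient (L i)) θ)
            (gradient (fun θ => (1 / (m : ℝ)) * ∑ j : Fin m, L j θ) θ - gradient (L i) θ))
      = gradient (fun θ => (1 / (m : ℝ)) * ∑ j : Fin m, L j θ) θ
        + (β / (2 * (m : ℝ))) • gradient
            (fun θ => ∑ i : Fin m,
              ‖gradient (L i) θ - gradient (fun θ => (1 / (m : ℝ)) * ∑ j : Fin m, L j θ) θ‖ ^ 2)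
            θ :=
  igr_first_order_identity_general n m β L hL θ
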